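/- Let N be a nested separation system of a finite graph G with structure tree T = T(N) and parts V_t = ⋂{A : (A,B) ∈ t}. Every node t of T is either a block node (V_t is an N-block, i.e., a maximal N-inseparable set) or a hub node (V_t = A∩B for some (A,B) ∈ t). -/

import Mathlib

open Set

variable {V : Type*}

/-- A separation of a graph `G`: a pair of vertex sets covering `V` such that
every edge lies within one of the sides. -/
def IsSep (G : SimpleGraph V) (p : Set V × Set V) : Prop :=
  p.1 ∪ p.2 = Set.univ ∧
    ∀ x y, G.Adj x y → (x ∈ p.1 ∧ y ∈ p.1) ∨ (x ∈ p.2 ∧ y ∈ p.2)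

/-- The partial order on separations: `(A,B) ≤ (C,D)` iff `A ⊆ C` and `B ⊇ D`. -/
def SepLE (p q : Set V × Set V) : Prop :=
  p.1 ⊆ q.1 ∧ q.2 ⊆ p.2

/-- The inverse of a separation. -/
def flipSep (p : Set V × Set V) : Set V × Set V := (p.2, p.1)

/-- A separation is proper if both sides minus the other are nonempty. -/
def IsProper (p : Set V × Set V) : Prop :=
  (p.1 \ p.2).Nonempty ∧ (p.2 \ p.1).Nonempty

/-- `≤`-comparability of separations. -/
def SepComparable (p q : Set V × Set V) : Prop := SepLE p q ∨ SepLE q p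

/-- Two separations are nested if one is comparable with the other or its inverse. -/
def Nested (p q : Set V × Set V) : Prop :=
  SepComparable p q ∨ SepComparable p (flipSep q)

/-- A separation `(A,B)` separates a vertex set `I` if `I` meets both `A∖B` and `B∖A`. -/
def SepSeparates (p : Set V × Set V) (I : Set V) : Prop :=
  (I ∩ (p.1 \ p.2)).Nonempty ∧ (I ∩ (p.2 \ p.1)).Nonempty

/-- A set is `S`-inseparable if no separation in `S` separates it. -/
def Insep (S : Set (Set V × Set V)) (U : Set V) : Prop :=
  ∀ p ∈ S, ¬ SepSeparates p U

/-- An `S`-block: a maximal `S`-inseparable vertex set. -/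
def IsBlock (S : Set (Set V × Set V)) (b : Set V) : Prop :=
  Insep S b ∧ ∀ b', Insep S b' → b ⊆ b' → b' = b

/-- A separation system: a symmetric set of proper separations. -/
def SepSystem (G : SimpleGraph V) (N : Set (Set V × Set V)) : Prop :=
  (∀ p ∈ N, IsSep G p ∧ IsProper p) ∧ ∀ p ∈ N, flipSep p ∈ N

/-- A nested separation system. -/
def NestedSys (G : SimpleGraph V) (N : Set (Set V × Set V)) : Prop :=
  SepSystem G N ∧ ∀ p ∈ N, ∀ q ∈ N, Nested p q

/-- Strict version of `SepLE`. -/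
def SepLT (p q : Set V × Set V) : Prop := SepLE p q ∧ p ≠ q

/-- `p` is a predecessor of `q` in `(N, ≤)`. -/
def SepPred (N : Set (Set V × Set V)) (p q : Set V × Set V) : Prop :=
  p ∈ N ∧ q ∈ N ∧ SepLT p q ∧ ∀ r ∈ N, ¬ (SepLT p r ∧ SepLT r q)

/-- The relation `∼` on a nested separation system `N`:
`(A,B) ∼ (C,D)` iff they are equal or `(B,A)` is a predecessor of `(C,D)` in `(N,≤)`. -/
def SimRel (N : Set (Set V × Set V)) (p q : Set V × Set V) : Prop :=
  p = q ∨ SepPred N (flipSep p) q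

/-- The `∼`-equivalence class of a separation `p ∈ N`. -/
def classOf (N : Set (Set V × Set V)) (p : Set V × Set V) : Set (Set V × Set V) :=
  {q | q ∈ N ∧ SimRel N p q}

/-- The part `V_t` associated with a node `t` of the structure tree. -/
def Vpart (t : Set (Set V × Set V)) : Set V := {v | ∀ p ∈ t, v ∈ p.1}

/-- The four corner separations of the cross-diagram of two separations. -/
def cornerSep (p q : Set V × Set V) : Fin 4 → Set V × Set V :=
  ![(p.1 ∩ q.1, p.2 ∪ q.2), (p.1 ∩ q.2, p.2 ∪ q.1),
    (p.2 ∩ q.1, p.1 ∪ q.2), (p.2 ∩ q.2, p.1 ∪ q.1)]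

/-- `p` weakly separates `I₁` and `I₂`. -/
def WeaklySep (p : Set V × Set V) (I₁ I₂ : Set V) : Prop :=
  (I₁ ⊆ p.1 ∧ I₂ ⊆ p.2) ∨ (I₁ ⊆ p.2 ∧ I₂ ⊆ p.1)

/-- `S` separates the collection `I` well. -/
def SeparatesWell (S : Set (Set V × Set V)) (I : Set (Set V)) : Prop :=
  ∀ p ∈ S, ∀ q ∈ S, ¬ Nested p q →
    ∀ I₁ ∈ I, ∀ I₂ ∈ I, I₁ ⊆ p.1 ∩ q.1 → I₂ ⊆ p.2 ∩ q.2 →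
      ∃ r ∈ S, I₁ ⊆ r.1 ∧ r.1 ⊆ p.1 ∩ q.1 ∧ p.2 ∪ q.2 ⊆ r.2

/-- An extremal separation of a separation system `S`. -/
def Extremal (S : Set (Set V × Set V)) (p : Set V × Set V) : Prop :=
  ∀ q ∈ S, SepLE p q ∨ SepLE p (flipSep q)

/-- A tight separation: every vertex of the separator has neighbours on both sides. -/
def Tight (G : SimpleGraph V) (p : Set V × Set V) : Prop :=
  ∀ v ∈ p.1 ∩ p.2, (∃ x ∈ p.1 \ p.2, G.Adj v x) ∧ ∃ y ∈ p.2 \ p.1, G.Adj v y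


/-!
The separations of one class `t = [p]` all point towards each other: any two distinct
`q, r ∈ t` satisfy `(q.2, q.1) ≤ r`, because each of them is either `p` or has `(p.2, p.1)`
as a predecessor, and nestedness rules out every other position. Hence a vertex of the
separator `q.1 ∩ q.2` of some `q ∈ t` lies in every `r.1`, i.e. in `V_t`.

`V_t` is `N`-inseparable: by nestedness, a separation `c ∈ N` crossing `V_t`, or its inverse,
would lie above `(p.2, p.1)`, and then (by finiteness) above some successor `r` of
`(p.2, p.1)`; but `r ∈ t`, so `V_t ⊆ r.1 ⊆ c.1`. If `V_t` is not maximal, some inseparable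
`b ⊋ V_t` contains a vertex outside `q.1` for some `q ∈ t`; as `q` does not separate `b`,
`V_t ⊆ q.2`, so `V_t` is the separator of `q`.
-/

lemma SepLE.trans {p q r : Set V × Set V} (h₁ : SepLE p q) (h₂ : SepLE q r) : SepLE p r :=
  ⟨h₁.1.trans h₂.1, h₂.2.trans h₁.2⟩

lemma SepLE.flipSep {p q : Set V × Set V} (h : SepLE p q) : SepLE (flipSep q) (flipSep p) :=
  ⟨h.2, h.1⟩

def sepOrd (p : Set V × Set V) : Set V × (Set V)ᵒᵈ := (p.1, OrderDual.toDual p.2)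

lemma sepLE_iff_sepOrd_le {p q : Set V × Set V} : SepLE p q ↔ sepOrd p ≤ sepOrd q := Iff.rfl

lemma sepOrd_injective : Function.Injective (sepOrd (V := V)) := fun _ _ h => by
  simpa [sepOrd, Prod.ext_iff] using h

lemma exists_sepPred_le [Finite V] {N : Set (Set V × Set V)} {a c : Set V × Set V}
    (ha : a ∈ N) (hc : c ∈ N) (hac : SepLT a c) :
    ∃ r, SepPred N a r ∧ SepLE r c := by
  set S := {r | r ∈ N ∧ SepLT a r ∧ SepLE r c}
  obtain ⟨r, ⟨hrN, har, hrc⟩, hmin⟩ :=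
    S.toFinite.exists_minimalFor sepOrd S ⟨c, hc, hac, subset_rfl, subset_rfl⟩
  refine ⟨r, ⟨ha, hrN, har, fun s hsN ⟨has, hsr, hne⟩ => hne ?_⟩, hrc⟩
  have hsr' := sepLE_iff_sepOrd_le.1 hsr
  exact sepOrd_injective (hsr'.antisymm (hmin ⟨hsN, has, hsr.trans hrc⟩ hsr'))

section NestedSys

variable {G : SimpleGraph V} {N : Set (Set V × Set V)} {p : Set V × Set V}

lemma mem_classOf_self (hp : p ∈ N) : p ∈ classOf N p := ⟨hp, Or.inl rfl⟩

lemma NestedSys.flipSep_le_of_mem_classOf (hN : NestedSys G N) (hp : p ∈ N)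
    {q r : Set V × Set V} (hq : q ∈ classOf N p) (hr : r ∈ classOf N p) (hqr : q ≠ r) :
    SepLE (flipSep q) r := by
  obtain ⟨hqN, rfl | ⟨-, -, hpq, hq_min⟩⟩ := hq
  · obtain ⟨-, rfl | ⟨-, -, hpr, -⟩⟩ := hr
    · exact absurd rfl hqr
    · exact hpr.1
  obtain ⟨hrN, rfl | ⟨-, -, hpr, hr_min⟩⟩ := hr
  · exact hpq.1.flipSep
  rcases hN.2 q hqN r hrN with (hle | hle) | (hle | hle)
  · exact absurd ⟨hpq, hle, hqr⟩ (hr_min q hqN)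
  · exact absurd ⟨hpr, hle, Ne.symm hqr⟩ (hq_min r hrN)
  · -- `q ≤ (r.2, r.1)` would put `p.2 ⊆ q.1 ⊆ r.2 ⊆ p.1`, contradicting properness of `p`
    obtain ⟨z, hz₂, hz₁⟩ := (hN.1.1 p hp).2.2
    exact absurd (hpr.1.2 (hle.1 (hpq.1.1 hz₂))) hz₁
  · simpa [flipSep] using hle.flipSep

lemma NestedSys.inter_subset_vpart_classOf (hN : NestedSys G N) (hp : p ∈ N)
    {q : Set V × Set V} (hq : q ∈ classOf N p) : q.1 ∩ q.2 ⊆ Vpart (classOf N p) := by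
  intro v hv r hr
  by_cases hqr : q = r
  · exact hqr ▸ hv.1
  · exact (hN.flipSep_le_of_mem_classOf hp hq hr hqr).1 hv.2

lemma NestedSys.vpart_classOf_subset_or_of_flipSep_le [Finite V] (hN : NestedSys G N)
    (hp : p ∈ N) {c : Set V × Set V} (hc : c ∈ N) (hpc : SepLE (flipSep p) c) :
    Vpart (classOf N p) ⊆ c.1 ∨ Vpart (classOf N p) ⊆ c.2 := by
  by_cases he : flipSep p = c
  · exact Or.inr fun v hv => he ▸ hv p (mem_classOf_self hp)
  · obtain ⟨r, hpr, hrc⟩ := exists_sepPred_le (hN.1.2 p hp) hc ⟨hpc, he⟩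
    exact Or.inl fun v hv => hrc.1 (hv r ⟨hpr.2.1, Or.inr hpr⟩)

lemma NestedSys.vpart_classOf_subset_or [Finite V] (hN : NestedSys G N) (hp : p ∈ N)
    {c : Set V × Set V} (hc : c ∈ N) :
    Vpart (classOf N p) ⊆ c.1 ∨ Vpart (classOf N p) ⊆ c.2 := by
  have hVp : Vpart (classOf N p) ⊆ p.1 := fun v hv => hv p (mem_classOf_self hp)
  rcases hN.2 c hc p hp with (hle | hle) | (hle | hle)
  · exact (hN.vpart_classOf_subset_or_of_flipSep_le hp (hN.1.2 c hc) hle.flipSep).symm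
  · exact Or.inl (hVp.trans hle.1)
  · exact Or.inr (hVp.trans hle.2)
  · exact hN.vpart_classOf_subset_or_of_flipSep_le hp hc hle

lemma NestedSys.insep_vpart_classOf [Finite V] (hN : NestedSys G N) (hp : p ∈ N) :
    Insep N (Vpart (classOf N p)) := by
  rintro c hc ⟨⟨x, hx, -, hx₂⟩, ⟨y, hy, -, hy₁⟩⟩
  rcases hN.vpart_classOf_subset_or hp hc with h | h
  · exact hy₁ (h hy)
  · exact hx₂ (h hx)

end NestedSys

lemma exists_vpart_subset_inter_of_insep {N t : Set (Set V × Set V)} {b : Set V}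
    (ht : t ⊆ N) (hcover : ∀ q ∈ t, q.1 ∪ q.2 = univ)
    (hb : Insep N b) (hVb : Vpart t ⊆ b) (hbV : ¬ b ⊆ Vpart t) :
    ∃ q ∈ t, Vpart t ⊆ q.1 ∩ q.2 := by
  obtain ⟨x, hxb, hx⟩ := not_subset.1 hbV
  obtain ⟨q, hq, hxq₁⟩ : ∃ q ∈ t, x ∉ q.1 := by simpa [Vpart] using hx
  have hxq₂ : x ∈ q.2 := ((hcover q hq).symm ▸ mem_univ x).resolve_left hxq₁
  refine ⟨q, hq, fun u hu => ⟨hu q hq, by_contra fun hu₂ => ?_⟩⟩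
  exact hb q (ht hq) ⟨⟨u, hVb hu, hu q hq, hu₂⟩, ⟨x, hxb, hxq₂, hxq₁⟩⟩

/-- Every node of the structure tree is a block node or a hub node. -/
theorem node_block_or_hub [Fintype V] (G : SimpleGraph V) (N : Set (Set V × Set V))
    (hN : NestedSys G N) :
    ∀ t : Set (Set V × Set V), (∃ p ∈ N, t = classOf N p) →
      IsBlock N (Vpart t) ∨ ∃ q ∈ t, Vpart t = q.1 ∩ q.2 := by
  rintro t ⟨p, hp, rfl⟩
  by_cases hmax : ∀ b, Insep N b → Vpart (classOf N p) ⊆ b → b = Vpart (classOf N p)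
  · exact Or.inl ⟨hN.insep_vpart_classOf hp, hmax⟩
  push Not at hmax
  obtain ⟨b, hb, hVb, hne⟩ := hmax
  obtain ⟨q, hq, hVq⟩ := exists_vpart_subset_inter_of_insep (fun _ h => h.1)
    (fun q hq => (hN.1.1 q hq.1).1.1) hb hVb fun h => hne (h.antisymm hVb)
  exact Or.inr ⟨q, hq, hVq.antisymm (hN.inter_subset_vpart_classOf hp hq)⟩
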